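/- arXiv:2109.08901 — 3 statements merged into one kernel-verified Lean document; each statement's English description precedes it below -/
import Mathlib

section
/- Let f : 2^Ω → ℝ be a monotone nondecreasing submodular set function on a finite set Ω with f(∅) = 0, and let B ≥ 1 be a budget. Let S be the set of size B produced by the greedy algorithm that starting from ∅ repeatedly adds an element with maximal marginal gain. Then f(S) ≥ (1 − 1/e) · max_{|S*| = B} f(S*). In particular, f(S) ≥ (1 − (1 − 1/B)^B) · f(S*) for the optimal S*. -/
/-- Nemhauser–Wolsey–Fisher greedy guarantee: for monotone submodular f with f(∅)=0,
the greedy algorithm with budget B achieves f(S) ≥ (1 − 1/e)·f(S*) and in fact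
f(S) ≥ (1 − (1 − 1/B)^B)·f(S*) for every set S* of size B. -/
theorem stmt8 {Ω : Type*} [Fintype Ω] [DecidableEq Ω] (f : Finset Ω → ℝ)
    (hsub : ∀ S₁ S₂ : Finset Ω, S₁ ⊆ S₂ → ∀ x ∉ S₂,
        f (insert x S₂) - f S₂ ≤ f (insert x S₁) - f S₁)
    (hmono : ∀ S T : Finset Ω, S ⊆ T → f S ≤ f T)
    (h0 : f ∅ = 0)
    (B : ℕ) (hB : 1 ≤ B)
    (S : ℕ → Finset Ω) (x : ℕ → Ω)
    (hS0 : S 0 = ∅)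
    (hgreedy : ∀ i < B, x i ∉ S i ∧ S (i + 1) = insert (x i) (S i) ∧
        ∀ y ∉ S i, f (insert y (S i)) - f (S i) ≤ f (insert (x i) (S i)) - f (S i)) :
    ∀ T : Finset Ω, T.card = B →
      (1 - (Real.exp 1)⁻¹) * f T ≤ f (S B) ∧
        (1 - (1 - 1 / (B : ℝ)) ^ B) * f T ≤ f (S B) := by
  intro T hT
  have hfT : 0 ≤ f T := by
    have := hmono ∅ T (Finset.empty_subset T); linarith
  have hBpos : (0:ℝ) < (B:ℝ) := by exact_mod_cast Nat.pos_of_ne_zero (by omega)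
  have hq : 0 ≤ 1 - 1/(B:ℝ) := by
    have : 1/(B:ℝ) ≤ 1 := by
      rw [div_le_one hBpos]; exact_mod_cast hB
    linarith
  -- submodular expansion lemma
  have expand : ∀ (T' A : Finset Ω),
      f (A ∪ T') - f A ≤ ∑ y ∈ T' \ A, (f (insert y A) - f A) := by
    intro T'
    induction T' using Finset.induction_on with
    | empty => intro A; simp
    | @insert a T' ha ih =>
      intro A
      by_cases haA : a ∈ A
      · have h1 : A ∪ insert a T' = A ∪ T' := by
          ext z; simp only [Finset.mem_union, Finset.mem_insert]
          constructor
          · rintro (h | rfl | h)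
            · exact Or.inl h
            · exact Or.inl haA
            · exact Or.inr h
          · rintro (h | h)
            · exact Or.inl h
            · exact Or.inr (Or.inr h)
        have h2 : insert a T' \ A = T' \ A := by
          ext z; simp only [Finset.mem_sdiff, Finset.mem_insert]
          constructor
          · rintro ⟨rfl | h, hz⟩
            · exact absurd haA hz
            · exact ⟨h, hz⟩
          · rintro ⟨h, hz⟩; exact ⟨Or.inr h, hz⟩
        rw [h1, h2]; exact ih A
      · have h1 : A ∪ insert a T' = insert a (A ∪ T') := Finset.union_insert a A T'
        have h2 : insert a T' \ A = insert a (T' \ A) := by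
          ext z; simp only [Finset.mem_sdiff, Finset.mem_insert]
          constructor
          · rintro ⟨rfl | h, hz⟩
            · exact Or.inl rfl
            · exact Or.inr ⟨h, hz⟩
          · rintro (rfl | ⟨h, hz⟩)
            · exact ⟨Or.inl rfl, haA⟩
            · exact ⟨Or.inr h, hz⟩
        have haT' : a ∉ T' \ A := by simp [ha]
        rw [h1, h2, Finset.sum_insert haT']
        have haAT : a ∉ A ∪ T' := by simp [haA, ha]
        have hstep : f (insert a (A ∪ T')) - f (A ∪ T') ≤ f (insert a A) - f A :=
          hsub A (A ∪ T') (Finset.subset_union_left) a haAT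
        have := ih A
        linarith
  -- per-step recurrence
  have step : ∀ i < B, f T - f (S i) ≤ (B:ℝ) * (f (S (i+1)) - f (S i)) := by
    intro i hi
    obtain ⟨hx, hSi, hmax⟩ := hgreedy i hi
    set g := f (S (i+1)) - f (S i) with hg
    have hg0 : 0 ≤ g := by
      rw [hg, hSi]
      have := hmono (S i) (insert (x i) (S i)) (Finset.subset_insert _ _)
      linarith
    have h1 : f T ≤ f (S i ∪ T) := hmono T _ (Finset.subset_union_right)
    have h2 := expand T (S i)
    have h3 : ∑ y ∈ T \ S i, (f (insert y (S i)) - f (S i)) ≤ (T \ S i).card • g := by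
      apply Finset.sum_le_card_nsmul
      intro y hy
      rw [hg, hSi]
      exact hmax y (Finset.mem_sdiff.mp hy).2
    have hcard : ((T \ S i).card : ℝ) ≤ (B:ℝ) := by
      have : (T \ S i).card ≤ T.card := Finset.card_le_card (Finset.sdiff_subset)
      exact_mod_cast hT ▸ this
    have h4 : ((T \ S i).card : ℝ) * g ≤ (B:ℝ) * g := mul_le_mul_of_nonneg_right hcard hg0
    have h3' : ∑ y ∈ T \ S i, (f (insert y (S i)) - f (S i)) ≤ ((T \ S i).card : ℝ) * g := by
      simpa [nsmul_eq_mul] using h3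
    linarith
  -- geometric decay
  have key : ∀ i ≤ B, f T - f (S i) ≤ (1 - 1/(B:ℝ))^i * f T := by
    intro i
    induction i with
    | zero => intro _; rw [hS0, h0]; simp
    | succ i ih =>
      intro hiB
      have hi : i < B := hiB
      have hrec := step i hi
      have hih := ih (Nat.le_of_lt hi)
      have hdiv : (f T - f (S i)) / (B:ℝ) ≤ f (S (i+1)) - f (S i) := by
        rw [div_le_iff₀ hBpos]; linarith [hrec, mul_comm (f (S (i+1)) - f (S i)) (B:ℝ)]
      have h5 : f T - f (S (i+1)) ≤ (1 - 1/(B:ℝ)) * (f T - f (S i)) := by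
        have : (f T - f (S i)) / (B:ℝ) = (1/(B:ℝ)) * (f T - f (S i)) := by ring
        rw [this] at hdiv
        nlinarith
      calc f T - f (S (i+1)) ≤ (1 - 1/(B:ℝ)) * (f T - f (S i)) := h5
        _ ≤ (1 - 1/(B:ℝ)) * ((1 - 1/(B:ℝ))^i * f T) := mul_le_mul_of_nonneg_left hih hq
        _ = (1 - 1/(B:ℝ))^(i+1) * f T := by ring
  have main := key B le_rfl
  have second : (1 - (1 - 1 / (B : ℝ)) ^ B) * f T ≤ f (S B) := by nlinarith [main]
  refine ⟨?_, second⟩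
  -- (1-1/B)^B ≤ e⁻¹
  have hexp : (1 - 1/(B:ℝ))^B ≤ (Real.exp 1)⁻¹ := by
    have h1 : 1 - 1/(B:ℝ) ≤ Real.exp (-(1/(B:ℝ))) := by
      have := Real.add_one_le_exp (-(1/(B:ℝ))); linarith
    have h2 : (1 - 1/(B:ℝ))^B ≤ (Real.exp (-(1/(B:ℝ))))^B :=
      pow_le_pow_left₀ hq h1 B
    have h3 : (Real.exp (-(1/(B:ℝ))))^B = Real.exp ((B:ℝ) * (-(1/(B:ℝ)))) :=
      (Real.exp_nat_mul _ B).symm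
    have h4 : (B:ℝ) * (-(1/(B:ℝ))) = -1 := by field_simp
    rw [h3, h4, Real.exp_neg] at h2
    exact h2
  have : (1 - (Real.exp 1)⁻¹) * f T ≤ (1 - (1 - 1 / (B : ℝ)) ^ B) * f T :=
    mul_le_mul_of_nonneg_right (by linarith) hfT
  linarith
end

section
/- Let f be a monotone submodular function on a finite set Ω with f(∅) = 0, let S* be an optimal set of size B, and let S_i denote the greedy set after i steps. Then for each i, f(S*) − f(S_{i+1}) ≤ (1 − 1/B)(f(S*) − f(S_i)), and consequently f(S*) − f(S_B) ≤ (1 − 1/B)^B f(S*) ≤ e^{−1} f(S*). -/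
/-- Submodular telescoping: f(A ∪ T) − f(A) ≤ Σ_{y ∈ T \ A} (f(A ∪ {y}) − f(A)). -/
lemma stmt9_telescope {Ω : Type*} [Fintype Ω] [DecidableEq Ω] (f : Finset Ω → ℝ)
    (hsub : ∀ S₁ S₂ : Finset Ω, S₁ ⊆ S₂ → ∀ x ∉ S₂,
        f (insert x S₂) - f S₂ ≤ f (insert x S₁) - f S₁)
    (T : Finset Ω) : ∀ A : Finset Ω,
    f (A ∪ T) - f A ≤ ∑ y ∈ T \ A, (f (insert y A) - f A) := by
  induction T using Finset.induction_on with
  | empty => intro A; simp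
  | @insert a T ha ih =>
    intro A
    by_cases haA : a ∈ A
    · have h1 : A ∪ insert a T = A ∪ T := by
        rw [Finset.union_insert, Finset.insert_eq_self.mpr (Finset.mem_union_left T haA)]
      have h2 : insert a T \ A = T \ A := Finset.insert_sdiff_of_mem T haA
      rw [h1, h2]; exact ih A
    · have h1 : A ∪ insert a T = insert a (A ∪ T) := by ext z; simp [Finset.mem_insert]
      have h2 : insert a T \ A = insert a (T \ A) := Finset.insert_sdiff_of_notMem T haA
      have haAT : a ∉ A ∪ T := by simp [haA, ha]
      have haTA : a ∉ T \ A := by simp [ha]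
      rw [h1, h2, Finset.sum_insert haTA]
      have key : f (insert a (A ∪ T)) - f (A ∪ T) ≤ f (insert a A) - f A :=
        hsub A (A ∪ T) Finset.subset_union_left a haAT
      have := ih A
      linarith

/-- Per-step inequality in the greedy analysis: the optimality gap contracts by a
factor (1 − 1/B) at each greedy step, hence after B steps the gap is at most
(1 − 1/B)^B f(S*) ≤ e⁻¹ f(S*). -/
theorem stmt9 {Ω : Type*} [Fintype Ω] [DecidableEq Ω] (f : Finset Ω → ℝ)
    (hsub : ∀ S₁ S₂ : Finset Ω, S₁ ⊆ S₂ → ∀ x ∉ S₂,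
        f (insert x S₂) - f S₂ ≤ f (insert x S₁) - f S₁)
    (hmono : ∀ S T : Finset Ω, S ⊆ T → f S ≤ f T)
    (h0 : f ∅ = 0)
    (B : ℕ) (hB : 1 ≤ B)
    (S : ℕ → Finset Ω) (x : ℕ → Ω)
    (hS0 : S 0 = ∅)
    (hgreedy : ∀ i < B, x i ∉ S i ∧ S (i + 1) = insert (x i) (S i) ∧
        ∀ y ∉ S i, f (insert y (S i)) - f (S i) ≤ f (insert (x i) (S i)) - f (S i))
    (Sstar : Finset Ω) (hcard : Sstar.card = B)
    (hopt : ∀ T : Finset Ω, T.card = B → f T ≤ f Sstar) :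
    (∀ i < B, f Sstar - f (S (i + 1)) ≤ (1 - 1 / (B : ℝ)) * (f Sstar - f (S i))) ∧
      f Sstar - f (S B) ≤ (1 - 1 / (B : ℝ)) ^ B * f Sstar ∧
      f Sstar - f (S B) ≤ (Real.exp 1)⁻¹ * f Sstar := by
  have hBpos : (0:ℝ) < B := by exact_mod_cast hB
  have hB0 : (B:ℝ) ≠ 0 := ne_of_gt hBpos
  have hfactor : (0:ℝ) ≤ 1 - 1 / B := by
    rw [sub_nonneg, div_le_one hBpos]; exact_mod_cast hB
  -- per-step inequality
  have step : ∀ i < B, f Sstar - f (S (i + 1)) ≤ (1 - 1 / (B : ℝ)) * (f Sstar - f (S i)) := by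
    intro i hi
    obtain ⟨hx, hSsucc, hbest⟩ := hgreedy i hi
    set g := f (insert (x i) (S i)) - f (S i) with hg
    have hgnonneg : 0 ≤ g := by
      have := hmono (S i) (insert (x i) (S i)) (Finset.subset_insert _ _)
      linarith
    have htel := stmt9_telescope f hsub Sstar (S i)
    have hsumle : ∑ y ∈ Sstar \ S i, (f (insert y (S i)) - f (S i))
        ≤ (Sstar \ S i).card * g := by
      have := Finset.sum_le_sum (s := Sstar \ S i) (f := fun y => f (insert y (S i)) - f (S i)) (g := fun _ => g) (fun y hy =>
          hbest y (Finset.mem_sdiff.mp hy).2)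
      simpa [Finset.sum_const, nsmul_eq_mul] using this
    have hcardle : ((Sstar \ S i).card : ℝ) ≤ B := by
      have : (Sstar \ S i).card ≤ Sstar.card := Finset.card_le_card (Finset.sdiff_subset)
      exact_mod_cast hcard ▸ this
    have hmul : ((Sstar \ S i).card : ℝ) * g ≤ B * g :=
      mul_le_mul_of_nonneg_right hcardle hgnonneg
    have hSstar_le : f Sstar ≤ f (S i ∪ Sstar) :=
      hmono _ _ Finset.subset_union_right
    have key : f Sstar - f (S i) ≤ B * g := by
      have : ((Sstar \ S i).card : ℝ) * g = ∑ y ∈ Sstar \ S i, g := by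
        rw [Finset.sum_const, nsmul_eq_mul]
      linarith [htel, hsumle, hmul, hSstar_le]
    rw [hSsucc]
    have : f (insert (x i) (S i)) = f (S i) + g := by rw [hg]; ring
    rw [this]
    have hgge : (f Sstar - f (S i)) / B ≤ g := by
      rw [div_le_iff₀ hBpos]; linarith [key]
    have expand : (1 - 1 / (B:ℝ)) * (f Sstar - f (S i))
        = (f Sstar - f (S i)) - (f Sstar - f (S i)) / B := by
      field_simp
    rw [expand]; linarith
  refine ⟨step, ?_, ?_⟩
  · -- iterate
    have hfS0 : f (S 0) = 0 := by rw [hS0, h0]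
    have hind : ∀ i ≤ B, f Sstar - f (S i) ≤ (1 - 1 / (B : ℝ)) ^ i * f Sstar := by
      intro i
      induction i with
      | zero => intro _; simp [hfS0]
      | succ n ih =>
        intro hn
        have hnB : n < B := hn
        have h1 := step n hnB
        have h2 := ih (le_of_lt hnB)
        calc f Sstar - f (S (n+1)) ≤ (1 - 1 / (B:ℝ)) * (f Sstar - f (S n)) := h1
          _ ≤ (1 - 1 / (B:ℝ)) * ((1 - 1 / (B : ℝ)) ^ n * f Sstar) :=
              mul_le_mul_of_nonneg_left h2 hfactor
          _ = (1 - 1 / (B:ℝ)) ^ (n+1) * f Sstar := by ring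
    exact hind B le_rfl
  · have hfS0 : f (S 0) = 0 := by rw [hS0, h0]
    have hfstar : 0 ≤ f Sstar := by
      have := hmono ∅ Sstar (Finset.empty_subset _); linarith [h0 ▸ this]
    have hpow : (1 - 1 / (B:ℝ)) ^ B ≤ (Real.exp 1)⁻¹ := by
      have h1 : 1 - 1 / (B:ℝ) ≤ Real.exp (-(1 / B)) := by
        have := Real.add_one_le_exp (-(1 / (B:ℝ)))
        linarith
      calc (1 - 1 / (B:ℝ)) ^ B ≤ (Real.exp (-(1 / B))) ^ B :=
            pow_le_pow_left₀ hfactor h1 B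
        _ = Real.exp (-(1 / B) * B) := by rw [← Real.exp_nat_mul]; ring_nf
        _ = (Real.exp 1)⁻¹ := by
            rw [← Real.exp_neg]; congr 1; field_simp
    have hind : ∀ i ≤ B, f Sstar - f (S i) ≤ (1 - 1 / (B : ℝ)) ^ i * f Sstar := by
      intro i
      induction i with
      | zero => intro _; simp [hfS0]
      | succ n ih =>
        intro hn
        have hnB : n < B := hn
        have h1 := step n hnB
        have h2 := ih (le_of_lt hnB)
        calc f Sstar - f (S (n+1)) ≤ (1 - 1 / (B:ℝ)) * (f Sstar - f (S n)) := h1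
          _ ≤ (1 - 1 / (B:ℝ)) * ((1 - 1 / (B : ℝ)) ^ n * f Sstar) :=
              mul_le_mul_of_nonneg_left h2 hfactor
          _ = (1 - 1 / (B:ℝ)) ^ (n+1) * f Sstar := by ring
    calc f Sstar - f (S B) ≤ (1 - 1 / (B:ℝ)) ^ B * f Sstar := hind B le_rfl
      _ ≤ (Real.exp 1)⁻¹ * f Sstar := mul_le_mul_of_nonneg_right hpow hfstar
end

section
/- Let (X, dist) be a finite metric space and let S be the set of k centers produced by the farthest-point (k-center greedy) algorithm starting from any point. Then the covering radius r(S) = max_{x ∈ X} min_{c ∈ S} dist(x, c) satisfies r(S) ≤ 2 · r(S*) where S* is an optimal set of k centers minimizing the covering radius. -/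
/-- Distance from a point to the nearest center of a finite set of centers
(0 if the set is empty). -/
noncomputable def minDist {X : Type*} [MetricSpace X] (S : Finset X) (x : X) : ℝ :=
  if h : S.Nonempty then S.inf' h (fun c => dist x c) else 0

/-- Covering radius of a set of centers in a finite metric space. -/
noncomputable def covRad {X : Type*} [MetricSpace X] [Fintype X] [Nonempty X]
    (S : Finset X) : ℝ :=
  Finset.univ.sup' Finset.univ_nonempty (minDist S)

lemma minDist_le {X : Type*} [MetricSpace X] {S : Finset X} {c : X} (hc : c ∈ S) (x : X) :
    minDist S x ≤ dist x c := by
  rw [minDist, dif_pos ⟨c, hc⟩]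
  exact Finset.inf'_le _ hc

lemma minDist_anti {X : Type*} [MetricSpace X] {S T : Finset X} (hS : S.Nonempty)
    (hST : S ⊆ T) (x : X) : minDist T x ≤ minDist S x := by
  have hT : T.Nonempty := hS.mono hST
  simp only [minDist, dif_pos hS, dif_pos hT]
  exact Finset.le_inf' _ _ fun b hb => Finset.inf'_le _ (hST hb)

lemma exists_minDist {X : Type*} [MetricSpace X] {S : Finset X} (hS : S.Nonempty) (x : X) :
    ∃ s ∈ S, minDist S x = dist x s := by
  rw [minDist, dif_pos hS]
  exact Finset.exists_mem_eq_inf' hS _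

lemma minDist_le_covRad {X : Type*} [MetricSpace X] [Fintype X] [Nonempty X]
    (S : Finset X) (x : X) : minDist S x ≤ covRad S :=
  Finset.le_sup' _ (Finset.mem_univ x)

/-- Gonzalez's farthest-point greedy algorithm for k-center is a 2-approximation:
the covering radius of the greedy centers is at most twice the optimal covering radius. -/
theorem stmt19 {X : Type*} [MetricSpace X] [Fintype X] [Nonempty X] [DecidableEq X]
    (k : ℕ) (hk : 1 ≤ k) (c : ℕ → X) (S : ℕ → Finset X)
    (h0 : S 0 = {c 0})
    (hstep : ∀ i, i + 1 < k → S (i + 1) = insert (c (i + 1)) (S i) ∧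
        ∀ y : X, minDist (S i) y ≤ minDist (S i) (c (i + 1)))
    (Sstar : Finset X) (hcard : Sstar.card = k)
    (hopt : ∀ T : Finset X, T.card = k → covRad Sstar ≤ covRad T) :
    covRad (S (k - 1)) ≤ 2 * covRad Sstar := by
  -- membership of earlier centers
  have hmem : ∀ i, i < k → ∀ j, j ≤ i → c j ∈ S i := by
    intro i
    induction i with
    | zero => intro _ j hj; interval_cases j; simp [h0]
    | succ n ih =>
      intro hn j hj
      rw [(hstep n hn).1]
      rcases Nat.lt_or_ge j (n + 1) with h | h
      · exact Finset.mem_insert_of_mem (ih (Nat.lt_of_succ_lt hn) j (Nat.lt_succ_iff.mp h))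
      · have : j = n + 1 := le_antisymm hj h
        subst this; exact Finset.mem_insert_self _ _
  have hne : ∀ i, i < k → (S i).Nonempty := fun i hi => ⟨c i, hmem i hi i le_rfl⟩
  have hsub : ∀ i m, i ≤ m → m < k → S i ⊆ S m := by
    intro i m
    induction m with
    | zero => intro h _; interval_cases i; exact subset_rfl
    | succ n ih =>
      intro him hn
      rcases Nat.lt_or_ge i (n + 1) with h | h
      · refine (ih (Nat.lt_succ_iff.mp h) (Nat.lt_of_succ_lt hn)).trans ?_
        rw [(hstep n hn).1]; exact Finset.subset_insert _ _
      · have : i = n + 1 := le_antisymm him h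
        subst this; exact subset_rfl
  have hk1 : k - 1 < k := Nat.sub_lt hk one_pos
  -- the farthest point realizing the covering radius
  obtain ⟨x, -, hx⟩ := Finset.exists_mem_eq_sup' (Finset.univ_nonempty (α := X)) (minDist (S (k - 1)))
  set r := covRad (S (k - 1)) with hr
  have hxr : r = minDist (S (k - 1)) x := hx
  -- family of k+1 points pairwise at distance ≥ r
  set p : ℕ → X := fun i => if i < k then c i else x with hp
  have key : ∀ i j : ℕ, i < j → j ≤ k → r ≤ dist (p i) (p j) := by
    intro i j hij hjk
    have hik : i < k := lt_of_lt_of_le hij hjk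
    have hpi : p i = c i := if_pos hik
    rcases eq_or_lt_of_le hjk with hje | hjlt
    · -- j = k, p j = x
      have hpj : p j = x := by simp [hp, hje]
      rw [hpi, hpj, dist_comm]
      calc r = minDist (S (k - 1)) x := hxr
        _ ≤ dist x (c i) := minDist_le (hmem (k - 1) hk1 i (Nat.le_sub_one_of_lt hik)) x
    · -- j < k; j = m+1
      obtain ⟨m, rfl⟩ := Nat.exists_eq_add_of_lt hij
      have hm1 : i + m + 1 < k := hjlt
      have hpj : p (i + m + 1) = c (i + m + 1) := if_pos hjlt
      have hsm' : S (i + m) ⊆ S (k - 1) :=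
        hsub _ _ (by omega) hk1
      have hnem : (S (i + m)).Nonempty := hne _ (by omega)
      have h1 : r ≤ minDist (S (i + m)) x := hxr ▸ minDist_anti hnem hsm' x
      have h2 : minDist (S (i + m)) x ≤ minDist (S (i + m)) (c (i + m + 1)) :=
        (hstep (i + m) hm1).2 x
      have h3 : minDist (S (i + m)) (c (i + m + 1)) ≤ dist (c (i + m + 1)) (c i) :=
        minDist_le (hmem _ (by omega) i (by omega)) _
      rw [hpi, hpj, dist_comm]
      exact h1.trans (h2.trans h3)
  -- pigeonhole into the optimal centers
  have hstar_ne : Sstar.Nonempty := Finset.card_pos.mp (by omega)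
  have hchoose : ∀ i : Fin (k + 1), ∃ s ∈ Sstar, minDist Sstar (p i.val) = dist (p i.val) s :=
    fun i => exists_minDist hstar_ne _
  choose f hf1 hf2 using hchoose
  have hflt : ∀ i : Fin (k + 1), dist (p i.val) (f i) ≤ covRad Sstar := by
    intro i
    rw [← hf2 i]
    exact minDist_le_covRad Sstar _
  have hcardlt : Fintype.card {s // s ∈ Sstar} < Fintype.card (Fin (k + 1)) := by
    simp [Fintype.card_coe, hcard]
  obtain ⟨i, j, hij, heq⟩ :=
    Fintype.exists_ne_map_eq_of_card_lt (fun i : Fin (k + 1) => (⟨f i, hf1 i⟩ : {s // s ∈ Sstar}))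
      hcardlt
  have heq' : f i = f j := by simpa using heq
  have main : ∀ a b : Fin (k + 1), a < b → f a = f b → r ≤ 2 * covRad Sstar := by
    intro a b hab hfab
    have h1 : r ≤ dist (p a.val) (p b.val) := key a.val b.val hab (Nat.lt_succ_iff.mp b.2)
    have h2 : dist (p a.val) (p b.val) ≤ dist (p a.val) (f a) + dist (p b.val) (f b) := by
      rw [hfab, dist_comm (p b.val) (f b)]
      exact dist_triangle _ _ _
    have := add_le_add (hflt a) (hflt b)
    linarith
  rcases Ne.lt_or_gt hij with h | h
  · exact main i j h heq'
  · exact main j i h heq'.symm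
end
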